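/- arXiv:quant-ph/0402014 — 9 statements merged into one kernel-verified Lean document; each statement's English description precedes it below -/
import Mathlib

section
/- Let H₁, H₂, H₃, H₄ be finite-dimensional complex inner product spaces, let f : H₁ → H₂, g : H₂ → H₃, h : H₃ → H₄ be conjugate-linear maps, and let U be a unitary operator on H₂ and V a unitary operator on H₃. Set Θ := σ(((id_{H₁} ⊗ U) Ψ_f) ⊗ₜ ((V ⊗ id_{H₄}) Ψ_h)), where σ : (H₁ ⊗ H₂) ⊗ (H₃ ⊗ H₄) ≃ H₁ ⊗ ((H₂ ⊗ H₃) ⊗ H₄) is the canonical reassociation sending (x₁ ⊗ x₂) ⊗ (x₃ ⊗ x₄) to x₁ ⊗ ((x₂ ⊗ x₃) ⊗ x₄). Then (id_{H₁} ⊗ (P_g ⊗ id_{H₄})) Θ = τ(Ψ_{h ∘ V† ∘ g ∘ U ∘ f} ⊗ₜ Ψ_g), where h ∘ V† ∘ g ∘ U ∘ f : H₁ → H₄ is again conjugate-linear, and τ : (H₁ ⊗ H₄) ⊗ (H₂ ⊗ H₃) ≃ H₁ ⊗ ((H₂ ⊗ H₃) ⊗ H₄) is the canonical reindexing sending (x₁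 ⊗ x₄) ⊗ (x₂ ⊗ x₃) to x₁ ⊗ ((x₂ ⊗ x₃) ⊗ x₄). -/
open scoped TensorProduct ComplexConjugate ComplexInnerProductSpace

noncomputable section

/-- The state `Ψ_f = ∑ i, b i ⊗ₜ f (b i)` associated to a conjugate-linear map `f`
and an orthonormal basis `b`. -/
def PsiState {H₁ H₂ : Type*} [NormedAddCommGroup H₁] [InnerProductSpace ℂ H₁]
    [NormedAddCommGroup H₂] [InnerProductSpace ℂ H₂]
    {ι : Type*} [Fintype ι] (b : OrthonormalBasis ι ℂ H₁) (f : H₁ →ₗ⋆[ℂ] H₂) :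
    H₁ ⊗[ℂ] H₂ := ∑ i, b i ⊗ₜ[ℂ] f (b i)

/-- The functional `ε_g : H₁ ⊗ H₂ →ₗ[ℂ] ℂ`, `ε_g (φ ⊗ₜ ψ) = ⟪g φ, ψ⟫`, associated to a
conjugate-linear map `g`. -/
def epsFun {H₁ H₂ : Type*} [NormedAddCommGroup H₁] [InnerProductSpace ℂ H₁]
    [NormedAddCommGroup H₂] [InnerProductSpace ℂ H₂] (g : H₁ →ₗ⋆[ℂ] H₂) :
    H₁ ⊗[ℂ] H₂ →ₗ[ℂ] ℂ :=
  TensorProduct.lift <| LinearMap.mk₂ ℂ (fun φ ψ => ⟪g φ, ψ⟫)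
    (fun φ φ' ψ => by simp [inner_add_left])
    (fun c φ ψ => by simp [inner_smul_left]; ring)
    (fun φ ψ ψ' => by simp [inner_add_right])
    (fun c φ ψ => by simp [inner_smul_right])

/-- The (unnormalized) projector `P_g x = ε_g x • Ψ_g` onto the state `Ψ_g` of a
conjugate-linear map `g`. -/
def Pproj {H₁ H₂ : Type*} [NormedAddCommGroup H₁] [InnerProductSpace ℂ H₁]
    [NormedAddCommGroup H₂] [InnerProductSpace ℂ H₂]
    {ι : Type*} [Fintype ι] (b : OrthonormalBasis ι ℂ H₁) (g : H₁ →ₗ⋆[ℂ] H₂) :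
    H₁ ⊗[ℂ] H₂ →ₗ[ℂ] H₁ ⊗[ℂ] H₂ :=
  (epsFun g).smulRight (PsiState b g)


lemma key_sum {H₃ H₄ : Type*} [NormedAddCommGroup H₃] [InnerProductSpace ℂ H₃]
    [NormedAddCommGroup H₄] [InnerProductSpace ℂ H₄]
    {ι : Type*} [Fintype ι] (b₃ : OrthonormalBasis ι ℂ H₃)
    (h : H₃ →ₗ⋆[ℂ] H₄) (V : H₃ ≃ₗᵢ[ℂ] H₃) (x : H₃) :
    ∑ k, ⟪x, V (b₃ k)⟫ • h (b₃ k) = h (V.symm x) := by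
  conv_rhs => rw [← b₃.sum_repr (V.symm x)]
  rw [map_sum]
  refine Finset.sum_congr rfl fun k _ => ?_
  rw [LinearMap.map_smulₛₗ, b₃.repr_apply_apply]
  congr 1
  rw [inner_conj_symm, ← V.inner_map_map (V.symm x) (b₃ k), V.apply_symm_apply]

/-- the compositionality lemma with local unitaries
`(id ⊗ (P_g ⊗ id)) σ(((id ⊗ U)Ψ_f) ⊗ₜ ((V ⊗ id)Ψ_h)) = τ(Ψ_{h ∘ V† ∘ g ∘ U ∘ f} ⊗ₜ Ψ_g)`. -/
theorem compositionality_lemma_with_unitaries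
    {H₁ H₂ H₃ H₄ : Type*}
    [NormedAddCommGroup H₁] [InnerProductSpace ℂ H₁] [FiniteDimensional ℂ H₁]
    [NormedAddCommGroup H₂] [InnerProductSpace ℂ H₂] [FiniteDimensional ℂ H₂]
    [NormedAddCommGroup H₃] [InnerProductSpace ℂ H₃] [FiniteDimensional ℂ H₃]
    [NormedAddCommGroup H₄] [InnerProductSpace ℂ H₄] [FiniteDimensional ℂ H₄]
    {ι₁ ι₂ ι₃ : Type*} [Fintype ι₁] [Fintype ι₂] [Fintype ι₃]
    (b₁ : OrthonormalBasis ι₁ ℂ H₁) (b₂ : OrthonormalBasis ι₂ ℂ H₂)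
    (b₃ : OrthonormalBasis ι₃ ℂ H₃)
    (f : H₁ →ₗ⋆[ℂ] H₂) (g : H₂ →ₗ⋆[ℂ] H₃) (h : H₃ →ₗ⋆[ℂ] H₄)
    (U : H₂ ≃ₗᵢ[ℂ] H₂) (V : H₃ ≃ₗᵢ[ℂ] H₃) :
    -- `σ : (H₁ ⊗ H₂) ⊗ (H₃ ⊗ H₄) ≃ H₁ ⊗ ((H₂ ⊗ H₃) ⊗ H₄)`,
    -- `(x₁ ⊗ x₂) ⊗ (x₃ ⊗ x₄) ↦ x₁ ⊗ ((x₂ ⊗ x₃) ⊗ x₄)`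
    letI σ : ((H₁ ⊗[ℂ] H₂) ⊗[ℂ] (H₃ ⊗[ℂ] H₄)) ≃ₗ[ℂ] H₁ ⊗[ℂ] ((H₂ ⊗[ℂ] H₃) ⊗[ℂ] H₄) :=
      (TensorProduct.assoc ℂ H₁ H₂ (H₃ ⊗[ℂ] H₄)).trans
        (TensorProduct.congr (LinearEquiv.refl ℂ H₁) (TensorProduct.assoc ℂ H₂ H₃ H₄).symm)
    -- `τ : (H₁ ⊗ H₄) ⊗ (H₂ ⊗ H₃) ≃ H₁ ⊗ ((H₂ ⊗ H₃) ⊗ H₄)`,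
    -- `(x₁ ⊗ x₄) ⊗ (x₂ ⊗ x₃) ↦ x₁ ⊗ ((x₂ ⊗ x₃) ⊗ x₄)`
    letI τ : ((H₁ ⊗[ℂ] H₄) ⊗[ℂ] (H₂ ⊗[ℂ] H₃)) ≃ₗ[ℂ] H₁ ⊗[ℂ] ((H₂ ⊗[ℂ] H₃) ⊗[ℂ] H₄) :=
      (TensorProduct.assoc ℂ H₁ H₄ (H₂ ⊗[ℂ] H₃)).trans
        (TensorProduct.congr (LinearEquiv.refl ℂ H₁) (TensorProduct.comm ℂ H₄ (H₂ ⊗[ℂ] H₃)))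
    -- `Θ := σ(((id ⊗ U) Ψ_f) ⊗ₜ ((V ⊗ id) Ψ_h))`
    letI Θ : H₁ ⊗[ℂ] ((H₂ ⊗[ℂ] H₃) ⊗[ℂ] H₄) :=
      σ ((TensorProduct.map (LinearMap.id (R := ℂ) (M := H₁)) U.toLinearEquiv.toLinearMap
            (PsiState b₁ f)) ⊗ₜ[ℂ]
         (TensorProduct.map V.toLinearEquiv.toLinearMap (LinearMap.id (R := ℂ) (M := H₄))
            (PsiState b₃ h)))
    -- `h ∘ V† ∘ g ∘ U ∘ f : H₁ → H₄`, a conjugate-linear map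
    letI hVgUf : H₁ →ₗ⋆[ℂ] H₄ :=
      h.comp ((V.symm.toLinearEquiv.toLinearMap).comp
        ((g.comp ((U.toLinearEquiv.toLinearMap).comp f : H₁ →ₗ⋆[ℂ] H₂) : H₁ →ₗ[ℂ] H₃)))
    TensorProduct.map (LinearMap.id (R := ℂ) (M := H₁))
        (TensorProduct.map (Pproj b₂ g) (LinearMap.id (R := ℂ) (M := H₄))) Θ
      = τ (PsiState b₁ hVgUf ⊗ₜ[ℂ] PsiState b₂ g) := by
  simp only [PsiState, map_sum, TensorProduct.map_tmul, TensorProduct.sum_tmul,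
    TensorProduct.tmul_sum, LinearEquiv.trans_apply, TensorProduct.assoc_tmul,
    TensorProduct.congr_tmul, LinearEquiv.refl_apply, TensorProduct.assoc_symm_tmul,
    TensorProduct.comm_tmul, LinearIsometryEquiv.coe_toLinearEquiv, LinearMap.id_coe, id_eq,
    Pproj, LinearMap.smulRight_apply, epsFun, TensorProduct.lift.tmul, LinearMap.mk₂_apply,
    LinearMap.coe_comp, Function.comp_apply, LinearMap.comp_apply]
  conv_lhs => rw [Finset.sum_comm]
  conv_rhs => rw [Finset.sum_comm]
  refine Finset.sum_congr rfl fun i _ => ?_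
  simp only [TensorProduct.smul_tmul, ← TensorProduct.tmul_sum, ← TensorProduct.sum_tmul]
  congr 2
  exact key_sum b₃ h V (g (U (f (b₁ i))))
end
end

section
/- Let H₁, H₂, H₃ be finite-dimensional complex inner product spaces, f : H₁ → H₂ and g : H₂ → H₃ conjugate-linear maps, V a unitary operator on H₂ and U a unitary operator on H₃ such that g ∘ V = U ∘ g. Then for every φ ∈ H₁: (id_{H₁ ⊗ H₂} ⊗ U†)((P_{V ∘ f} ⊗ id_{H₃})(α(φ ⊗ₜ Ψ_g))) = Ψ_{V ∘ f} ⊗ₜ ((g ∘ f) φ), where V ∘ f : H₁ → H₂ is conjugate-linear, α : H₁ ⊗ (H₂ ⊗ H₃) ≃ (H₁ ⊗ H₂) ⊗ H₃ is the canonical associator, and g ∘ f : H₁ → H₃ is ℂ-linear. (Measuring with the projector labeled V ∘ f and afterwards applying the unitary correction U† on the last factor produces the same output (g ∘ f)(φ) as measuring with the projector labeled f: the two paths are equivalent.) -/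
set_option maxRecDepth 4000


open scoped TensorProduct ComplexConjugate ComplexInnerProductSpace

noncomputable section

/-- equivalence of paths under a unitary correction:
if `g ∘ V = U ∘ g` then
`(id ⊗ U†)((P_{V∘f} ⊗ id)(α(φ ⊗ₜ Ψ_g))) = Ψ_{V∘f} ⊗ₜ ((g ∘ f) φ)`. -/
theorem path_equivalence_unitary_correction
    {H₁ H₂ H₃ : Type*}
    [NormedAddCommGroup H₁] [InnerProductSpace ℂ H₁] [FiniteDimensional ℂ H₁]
    [NormedAddCommGroup H₂] [InnerProductSpace ℂ H₂] [FiniteDimensional ℂ H₂]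
    [NormedAddCommGroup H₃] [InnerProductSpace ℂ H₃] [FiniteDimensional ℂ H₃]
    {ι₁ ι₂ : Type*} [Fintype ι₁] [Fintype ι₂]
    (b₁ : OrthonormalBasis ι₁ ℂ H₁) (b₂ : OrthonormalBasis ι₂ ℂ H₂)
    (f : H₁ →ₗ⋆[ℂ] H₂) (g : H₂ →ₗ⋆[ℂ] H₃)
    (V : H₂ ≃ₗᵢ[ℂ] H₂) (U : H₃ ≃ₗᵢ[ℂ] H₃)
    (hcomm : (g.comp V.toLinearEquiv.toLinearMap : H₂ →ₗ⋆[ℂ] H₃)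
           = (U.toLinearEquiv.toLinearMap.comp g : H₂ →ₗ⋆[ℂ] H₃))
    (φ : H₁) :
    -- `V ∘ f : H₁ → H₂`, a conjugate-linear map
    letI Vf : H₁ →ₗ⋆[ℂ] H₂ := V.toLinearEquiv.toLinearMap.comp f
    TensorProduct.map (LinearMap.id (R := ℂ) (M := H₁ ⊗[ℂ] H₂))
        U.symm.toLinearEquiv.toLinearMap
        (TensorProduct.map (Pproj b₁ Vf) (LinearMap.id (R := ℂ) (M := H₃))
          ((TensorProduct.assoc ℂ H₁ H₂ H₃).symm (φ ⊗ₜ[ℂ] PsiState b₂ g)))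
      = PsiState b₁ Vf ⊗ₜ[ℂ] g (f φ) := by
  set Vf : H₁ →ₗ⋆[ℂ] H₂ := V.toLinearEquiv.toLinearMap.comp f with hVf
  have key : ∑ j, (⟪Vf φ, b₂ j⟫ : ℂ) • U.symm (g (b₂ j)) = g (f φ) := by
    have h1 : ∑ j, (⟪Vf φ, b₂ j⟫ : ℂ) • g (b₂ j) = g (Vf φ) := by
      conv_rhs => rw [← b₂.sum_repr' (Vf φ)]
      rw [map_sum]
      refine Finset.sum_congr rfl fun j _ => ?_
      rw [LinearMap.map_smulₛₗ]
      congr 1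
      simp [inner_conj_symm]
    have h2 : g (Vf φ) = U (g (f φ)) := by
      have := congrArg (fun h : H₂ →ₗ⋆[ℂ] H₃ => h (f φ)) hcomm
      simpa [hVf] using this
    calc ∑ j, (⟪Vf φ, b₂ j⟫ : ℂ) • U.symm (g (b₂ j))
        = U.symm (∑ j, (⟪Vf φ, b₂ j⟫ : ℂ) • g (b₂ j)) := by
          simp [map_sum]
      _ = g (f φ) := by rw [h1, h2]; simp
  calc TensorProduct.map (LinearMap.id (R := ℂ) (M := H₁ ⊗[ℂ] H₂))
        U.symm.toLinearEquiv.toLinearMap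
        (TensorProduct.map (Pproj b₁ Vf) (LinearMap.id (R := ℂ) (M := H₃))
          ((TensorProduct.assoc ℂ H₁ H₂ H₃).symm (φ ⊗ₜ[ℂ] PsiState b₂ g)))
      = PsiState b₁ Vf ⊗ₜ[ℂ] ∑ j, (⟪Vf φ, b₂ j⟫ : ℂ) • U.symm (g (b₂ j)) := by
        rw [show PsiState b₂ g = ∑ j, b₂ j ⊗ₜ[ℂ] g (b₂ j) from rfl,
          TensorProduct.tmul_sum, map_sum, map_sum, map_sum, TensorProduct.tmul_sum]
        refine Finset.sum_congr rfl fun j _ => ?_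
        rw [TensorProduct.assoc_symm_tmul, TensorProduct.map_tmul, TensorProduct.map_tmul]
        simp only [LinearMap.id_coe, id_eq, Pproj, LinearMap.smulRight_apply, epsFun,
          TensorProduct.lift.tmul, LinearMap.mk₂_apply, TensorProduct.smul_tmul,
          LinearEquiv.coe_coe, LinearIsometryEquiv.coe_toLinearEquiv]
    _ = PsiState b₁ Vf ⊗ₜ[ℂ] g (f φ) := by rw [key]
end
end

section
/- Let n : Fin 8 → ℕ with n i > 0 for all i, H i := EuclideanSpace ℂ (Fin (n i)), and T := ⨂[ℂ] i, H i, with coefficients x_k of x ∈ T taken with respect to the basis of elementary tensors of standard basis vectors, indexed by k : Π i, Fin (n i). Let I be a subset of Fin 8 with decidable membership, T_I := ⨂[ℂ] (i : I), H i (with coefficients y_j indexed by j : Π (i : I), Fin (n i)), and Φ ∈ T_I. Define the rank-one operator Q_Φ : T_I →ₗ[ℂ] T_I by Q_Φ y := (∑_j conj(Φ_j) · y_j) • Φ, and let P_Φ^I : T →ₗ[ℂ] T be the conjugate of Q_Φ ⊗ id_{T_{Iᶜ}} under the canonical equivalence T ≃ T_I ⊗[ℂ] T_{Iᶜ}. Then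 for every Ψ ∈ T and every k : Π i, Fin (n i): (P_Φ^I Ψ)_k = ∑_{j : Π (i : I), Fin (n i)} Ψ_{k[j]} · conj(Φ_j) · Φ_{k∣I}, where k[j] : Π i, Fin (n i) agrees with j on I and with k off I, and k∣I is the restriction of k to I. -/
open scoped TensorProduct ComplexConjugate

noncomputable section

/-- The coefficient functional of `⨂[ℂ] i, EuclideanSpace ℂ (Fin (n i))` with respect to the
basis of elementary tensors of standard basis vectors, at the index `k : Π i, Fin (n i)`. -/
def piCoeff {ι : Type*} [Fintype ι] (n : ι → ℕ) (k : Π i, Fin (n i)) :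
    (⨂[ℂ] i, EuclideanSpace ℂ (Fin (n i))) →ₗ[ℂ] ℂ :=
  PiTensorProduct.lift
    ((MultilinearMap.mkPiAlgebra ℂ ι ℂ).compLinearMap fun i => EuclideanSpace.projₗ (k i))

lemma piCoeff_tprod {ι : Type*} [Fintype ι] (n : ι → ℕ) (k : Π i, Fin (n i))
    (v : Π i, EuclideanSpace ℂ (Fin (n i))) :
    piCoeff n k (PiTensorProduct.tprod ℂ v) = ∏ i, v i (k i) := by
  simp [piCoeff, EuclideanSpace.projₗ]

lemma piCoeff_symm_tmul
    (n : Fin 8 → ℕ)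
    (I : Set (Fin 8)) [DecidablePred (· ∈ I)]
    (E : (⨂[ℂ] i, EuclideanSpace ℂ (Fin (n i))) ≃ₗ[ℂ]
         (⨂[ℂ] (i : I), EuclideanSpace ℂ (Fin (n i))) ⊗[ℂ]
         (⨂[ℂ] (i : ↥Iᶜ), EuclideanSpace ℂ (Fin (n i))))
    (hE : ∀ v : Π i, EuclideanSpace ℂ (Fin (n i)),
      E (PiTensorProduct.tprod ℂ v)
        = (PiTensorProduct.tprod ℂ fun i : I => v i) ⊗ₜ[ℂ]
          (PiTensorProduct.tprod ℂ fun i : ↥Iᶜ => v i))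
    (k : Π i, Fin (n i))
    (y : ⨂[ℂ] (i : I), EuclideanSpace ℂ (Fin (n i)))
    (w : Π i : ↥Iᶜ, EuclideanSpace ℂ (Fin (n i))) :
    piCoeff n k (E.symm (y ⊗ₜ[ℂ] PiTensorProduct.tprod ℂ w))
      = piCoeff (fun i : I => n i) (fun i : I => k i) y * ∏ i : ↥Iᶜ, w i (k i) := by
  induction y using PiTensorProduct.induction_on with
  | smul_tprod r u =>
      set v' : Π i, EuclideanSpace ℂ (Fin (n i)) :=
        fun i => if h : i ∈ I then u ⟨i, h⟩ else w ⟨i, h⟩ with hv'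
      have h1 : (PiTensorProduct.tprod ℂ fun i : I => v' i) = PiTensorProduct.tprod ℂ u := by
        congr 1; funext i; simp [hv', i.2]
      have h2 : (PiTensorProduct.tprod ℂ fun i : ↥Iᶜ => v' i) = PiTensorProduct.tprod ℂ w := by
        congr 1; funext i
        have hni : (i : Fin 8) ∉ I := i.2
        simp only [hv', dif_neg hni]
      have hEv : E (PiTensorProduct.tprod ℂ v')
          = (PiTensorProduct.tprod ℂ u) ⊗ₜ[ℂ] (PiTensorProduct.tprod ℂ w) := by
        rw [hE, h1, h2]
      have key : E.symm ((PiTensorProduct.tprod ℂ) u ⊗ₜ[ℂ] (PiTensorProduct.tprod ℂ) w)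
          = PiTensorProduct.tprod ℂ v' := by
        rw [← hEv, LinearEquiv.symm_apply_apply]
      rw [← TensorProduct.smul_tmul', map_smul, map_smul, key, map_smul,
        piCoeff_tprod, piCoeff_tprod]
      have hsplit : (∏ i, v' i (k i))
          = (∏ i : I, u i (k i)) * ∏ i : ↥Iᶜ, w i (k i) := by
        rw [← Fintype.prod_subtype_mul_prod_subtype (· ∈ I) (fun i => v' i (k i))]
        congr 1
        · exact Finset.prod_congr rfl fun i _ => by simp [hv', i.2]
        · refine Fintype.prod_congr _ _ fun i => ?_
          simp only [hv', dif_neg i.2]; rfl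
      rw [hsplit]; simp only [smul_eq_mul]; ring
  | add a b ha hb =>
      rw [TensorProduct.add_tmul, map_add, map_add, ha, hb, map_add]; ring

/-- coefficient formula for the action of a (sub)system projector `P_Φ^I` on an
8-partite state. -/
theorem subsystem_projector_coefficients
    (n : Fin 8 → ℕ) (hn : ∀ i, 0 < n i)
    (I : Set (Fin 8)) [DecidablePred (· ∈ I)]
    (Φ : ⨂[ℂ] (i : I), EuclideanSpace ℂ (Fin (n i)))
    -- `E` is the canonical equivalence `T ≃ T_I ⊗ T_Iᶜ` splitting the tensor product
    -- along the subset `I`; it is uniquely determined by its action on elementary tensors.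
    (E : (⨂[ℂ] i, EuclideanSpace ℂ (Fin (n i))) ≃ₗ[ℂ]
         (⨂[ℂ] (i : I), EuclideanSpace ℂ (Fin (n i))) ⊗[ℂ]
         (⨂[ℂ] (i : ↥Iᶜ), EuclideanSpace ℂ (Fin (n i))))
    (hE : ∀ v : Π i, EuclideanSpace ℂ (Fin (n i)),
      E (PiTensorProduct.tprod ℂ v)
        = (PiTensorProduct.tprod ℂ fun i : I => v i) ⊗ₜ[ℂ]
          (PiTensorProduct.tprod ℂ fun i : ↥Iᶜ => v i))
    (Ψ : ⨂[ℂ] i, EuclideanSpace ℂ (Fin (n i)))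
    (k : Π i, Fin (n i)) :
    -- the rank-one operator `Q_Φ y := (∑ j, conj (Φ_j) * y_j) • Φ` on `T_I`
    letI QΦ : (⨂[ℂ] (i : I), EuclideanSpace ℂ (Fin (n i))) →ₗ[ℂ]
              (⨂[ℂ] (i : I), EuclideanSpace ℂ (Fin (n i))) :=
      LinearMap.smulRight
        (∑ j : Π i : I, Fin (n i), conj (piCoeff (fun i : I => n i) j Φ) •
          piCoeff (fun i : I => n i) j) Φ
    -- `P_Φ^I`, the conjugate of `Q_Φ ⊗ id` under the canonical equivalence `E`
    letI P : (⨂[ℂ] i, EuclideanSpace ℂ (Fin (n i))) →ₗ[ℂ]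
             (⨂[ℂ] i, EuclideanSpace ℂ (Fin (n i))) :=
      E.symm.toLinearMap ∘ₗ
        (TensorProduct.map QΦ (LinearMap.id
          (R := ℂ) (M := ⨂[ℂ] (i : ↥Iᶜ), EuclideanSpace ℂ (Fin (n i))))) ∘ₗ E.toLinearMap
    piCoeff n k (P Ψ)
      = ∑ j : Π i : I, Fin (n i),
          piCoeff n (fun i => if h : i ∈ I then j ⟨i, h⟩ else k i) Ψ *
            conj (piCoeff (fun i : I => n i) j Φ) *
            piCoeff (fun i : I => n i) (fun i : I => k i) Φ := by
  show _ = _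
  induction Ψ using PiTensorProduct.induction_on with
  | smul_tprod r v =>
      simp only [map_smul, LinearMap.comp_apply, LinearEquiv.coe_coe, LinearMap.smul_apply]
      rw [hE v, TensorProduct.map_tmul, LinearMap.id_coe, id_eq,
        LinearMap.smulRight_apply, ← TensorProduct.smul_tmul', map_smul, map_smul,
        piCoeff_symm_tmul n I E hE k Φ]
      simp only [LinearMap.sum_apply, LinearMap.smul_apply, smul_eq_mul, piCoeff_tprod]
      rw [Finset.sum_mul, Finset.mul_sum]
      refine Finset.sum_congr rfl fun j _ => ?_
      have hsplit : (∏ i, v i (if h : i ∈ I then j ⟨i, h⟩ else k i))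
          = (∏ i : I, v i (j i)) * ∏ i : ↥Iᶜ, v i (k i) := by
        rw [← Fintype.prod_subtype_mul_prod_subtype (· ∈ I)
          (fun i => v i (if h : i ∈ I then j ⟨i, h⟩ else k i))]
        congr 1
        · exact Fintype.prod_congr _ _ fun i => by rw [dif_pos i.2]
        · exact Fintype.prod_congr _ _ fun i => by rw [dif_neg i.2]
      rw [hsplit]
      ring
  | add a b ha hb =>
      simp only [map_add, LinearMap.add_apply] at *
      rw [ha, hb, ← Finset.sum_add_distrib]
      exact Finset.sum_congr rfl fun j _ => by ring
end
end

section
/- Let H₁, H₂ be finite-dimensional complex inner product spaces and b an orthonormal basis of H₁ indexed by a finite type. The map sending a conjugate-linear map f : H₁ → H₂ to Ψ_f := ∑ i, b i ⊗ₜ f (b i) ∈ H₁ ⊗[ℂ] H₂ is a ℂ-linear bijection from the space of conjugate-linear maps H₁ → H₂ onto H₁ ⊗[ℂ] H₂. That is, elements of H₁ ⊗ H₂ are in bijective (ℂ-linear) correspondence with conjugate-linear maps from H₁ to H₂. -/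
open scoped TensorProduct ComplexInnerProductSpace

/-- Rank-one conjugate-linear map `v ↦ ⟪v, x⟫ • y`. -/
noncomputable def rankOneConj {H₁ H₂ : Type*}
    [NormedAddCommGroup H₁] [InnerProductSpace ℂ H₁]
    [NormedAddCommGroup H₂] [InnerProductSpace ℂ H₂]
    (x : H₁) (y : H₂) : H₁ →ₗ⋆[ℂ] H₂ where
  toFun v := ⟪v, x⟫ • y
  map_add' u v := by simp [inner_add_left, add_smul]
  map_smul' c v := by simp [inner_smul_left, smul_smul, mul_comm]

/-- The bilinear map lifting to the inverse of `e`. -/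
noncomputable def rankOneConjBilin {H₁ H₂ : Type*}
    [NormedAddCommGroup H₁] [InnerProductSpace ℂ H₁]
    [NormedAddCommGroup H₂] [InnerProductSpace ℂ H₂] :
    H₁ →ₗ[ℂ] H₂ →ₗ[ℂ] (H₁ →ₗ⋆[ℂ] H₂) where
  toFun x :=
    { toFun := fun y => rankOneConj x y
      map_add' := fun y z => by ext v; simp [rankOneConj, smul_add]
      map_smul' := fun c y => by
        ext v
        show ⟪v, x⟫ • (c • y) = c • (⟪v, x⟫ • y)
        exact smul_comm _ _ _ }
  map_add' x x' := by ext y v; simp [rankOneConj, inner_add_right, add_smul]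
  map_smul' c x := by ext y v; simp [rankOneConj, inner_smul_right, smul_smul]

/-- `f ↦ Ψ_f := ∑ i, b i ⊗ₜ f (b i)` is a ℂ-linear bijection from the space of
conjugate-linear maps `H₁ → H₂` onto `H₁ ⊗[ℂ] H₂`. -/
theorem psiState_linear_bijective
    {H₁ H₂ : Type*}
    [NormedAddCommGroup H₁] [InnerProductSpace ℂ H₁] [FiniteDimensional ℂ H₁]
    [NormedAddCommGroup H₂] [InnerProductSpace ℂ H₂] [FiniteDimensional ℂ H₂]
    {ι : Type*} [Fintype ι] (b : OrthonormalBasis ι ℂ H₁) :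
    ∃ e : (H₁ →ₗ⋆[ℂ] H₂) →ₗ[ℂ] H₁ ⊗[ℂ] H₂,
      (∀ f : H₁ →ₗ⋆[ℂ] H₂, e f = ∑ i, b i ⊗ₜ[ℂ] f (b i)) ∧ Function.Bijective e := by
  classical
  set e : (H₁ →ₗ⋆[ℂ] H₂) →ₗ[ℂ] H₁ ⊗[ℂ] H₂ :=
    { toFun := fun f => ∑ i, b i ⊗ₜ[ℂ] f (b i)
      map_add' := fun f g => by simp [TensorProduct.tmul_add, Finset.sum_add_distrib]
      map_smul' := fun c f => by simp [TensorProduct.tmul_smul, Finset.smul_sum]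
    } with he
  set T : H₁ ⊗[ℂ] H₂ →ₗ[ℂ] (H₁ →ₗ⋆[ℂ] H₂) := TensorProduct.lift rankOneConjBilin with hT
  have hTe : ∀ f, T (e f) = f := by
    intro f
    ext v
    have h1 : T (e f) v = ∑ i, ⟪v, b i⟫ • f (b i) := by
      simp [he, hT, map_sum, LinearMap.sum_apply, rankOneConjBilin, rankOneConj]
    have h2 : f v = ∑ i, ⟪v, b i⟫ • f (b i) := by
      conv_lhs => rw [← b.sum_repr' v]
      simp [map_sum, LinearMap.map_smulₛₗ, inner_conj_symm]
    rw [h1, ← h2]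
  have heT : ∀ z, e (T z) = z := by
    intro z
    induction z using TensorProduct.induction_on with
    | zero => simp
    | tmul x y =>
      have : e (T (x ⊗ₜ[ℂ] y)) = ∑ i, b i ⊗ₜ[ℂ] (⟪b i, x⟫ • y) := by
        simp [he, hT, rankOneConjBilin, rankOneConj]
      rw [this]
      calc ∑ i, b i ⊗ₜ[ℂ] (⟪b i, x⟫ • y)
          = ∑ i, (⟪b i, x⟫ • b i) ⊗ₜ[ℂ] y := by
            simp [TensorProduct.smul_tmul]
        _ = (∑ i, ⟪b i, x⟫ • b i) ⊗ₜ[ℂ] y := by rw [TensorProduct.sum_tmul]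
        _ = x ⊗ₜ[ℂ] y := by rw [b.sum_repr']
    | add u v hu hv => simp [map_add, hu, hv]
  exact ⟨e, fun f => rfl, Function.bijective_iff_has_inverse.mpr ⟨T, hTe, heT⟩⟩
end

section
/- Let H₁, H₂ be finite-dimensional complex inner product spaces, f : H₁ → H₂ a conjugate-linear map, and φ ∈ H₁. Let p_φ : H₁ →ₗ[ℂ] H₁ be the (unnormalized) rank-one projector p_φ x := ⟪φ, x⟫ • φ. Then (p_φ ⊗ id_{H₂})(Ψ_f) = φ ⊗ₜ f φ. (Applying a unipartite projector onto φ to the first factor of the state Ψ_f produces exactly φ together with the function value f(φ) on the second factor: β-reduction.) -/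
open scoped TensorProduct ComplexInnerProductSpace

/-- β-reduction. Applying the rank-one projector onto `φ` to the first factor
of `Ψ_f` produces `φ ⊗ₜ f φ`. -/
theorem beta_reduction
    {H₁ H₂ : Type*}
    [NormedAddCommGroup H₁] [InnerProductSpace ℂ H₁] [FiniteDimensional ℂ H₁]
    [NormedAddCommGroup H₂] [InnerProductSpace ℂ H₂] [FiniteDimensional ℂ H₂]
    (f : H₁ →ₗ⋆[ℂ] H₂)
    {ι : Type*} [Fintype ι] (b : OrthonormalBasis ι ℂ H₁) (φ : H₁)
    -- `p_φ : H₁ →ₗ[ℂ] H₁`, `p_φ x = ⟪φ, x⟫ • φ`, the (unnormalized) rank-one projector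
    (p : H₁ →ₗ[ℂ] H₁) (hp : ∀ x, p x = ⟪φ, x⟫ • φ) :
    TensorProduct.map p (LinearMap.id (R := ℂ) (M := H₂)) (∑ i, b i ⊗ₜ[ℂ] f (b i))
      = φ ⊗ₜ[ℂ] f φ := by
  rw [map_sum]
  simp only [TensorProduct.map_tmul, LinearMap.id_coe, id_eq, hp, TensorProduct.smul_tmul]
  rw [← TensorProduct.tmul_sum]
  congr 1
  have key : ∑ i, ⟪φ, b i⟫ • f (b i) = f (∑ i, ⟪b i, φ⟫ • b i) := by
    rw [map_sum]
    refine Finset.sum_congr rfl fun i _ => ?_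
    rw [LinearMap.map_smulₛₗ]
    congr 1
    simp [inner_conj_symm]
  rw [key, OrthonormalBasis.sum_repr' b φ]
end

section
/- Let H₁, H₂ be finite-dimensional complex inner product spaces, f : H₁ → H₂ a conjugate-linear map, and f† : H₂ → H₁ its adjoint, i.e. the conjugate-linear map satisfying ⟪f† y, x⟫ = ⟪f x, y⟫ for all x, y. Then the swap equivalence TensorProduct.comm : H₁ ⊗[ℂ] H₂ ≃ H₂ ⊗[ℂ] H₁ maps Ψ_f to Ψ_{f†}: comm(∑ i, b i ⊗ₜ f (b i)) = ∑ j, c j ⊗ₜ f† (c j), for any orthonormal bases b of H₁ and c of H₂. (Reading a bipartite state in the opposite direction corresponds to taking the adjoint of its conjugate-linear functional label.) -/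
open scoped TensorProduct ComplexInnerProductSpace

/-- the swap equivalence maps `Ψ_f` to `Ψ_{f†}`, where `f†` is the adjoint of
the conjugate-linear map `f`. -/
theorem comm_psiState_eq_psiState_adjoint
    {H₁ H₂ : Type*}
    [NormedAddCommGroup H₁] [InnerProductSpace ℂ H₁] [FiniteDimensional ℂ H₁]
    [NormedAddCommGroup H₂] [InnerProductSpace ℂ H₂] [FiniteDimensional ℂ H₂]
    (f : H₁ →ₗ⋆[ℂ] H₂) (fadj : H₂ →ₗ⋆[ℂ] H₁)
    (hadj : ∀ (x : H₁) (y : H₂), ⟪fadj y, x⟫ = ⟪f x, y⟫)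
    {ι ι' : Type*} [Fintype ι] [Fintype ι']
    (b : OrthonormalBasis ι ℂ H₁) (c : OrthonormalBasis ι' ℂ H₂) :
    TensorProduct.comm ℂ H₁ H₂ (∑ i, b i ⊗ₜ[ℂ] f (b i))
      = ∑ j, c j ⊗ₜ[ℂ] fadj (c j) := by
  have key : ∀ i j, ⟪b i, fadj (c j)⟫ = ⟪c j, f (b i)⟫ := by
    intro i j
    rw [← inner_conj_symm, hadj, inner_conj_symm]
  rw [map_sum]
  simp only [TensorProduct.comm_tmul]
  conv_lhs => rw [Finset.sum_congr rfl fun (i : ι) _ => by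
    rw [← c.sum_repr' (f (b i))]]
  conv_rhs => rw [Finset.sum_congr rfl fun (j : ι') _ => by
    rw [← b.sum_repr' (fadj (c j))]]
  simp only [TensorProduct.sum_tmul, TensorProduct.tmul_sum, TensorProduct.smul_tmul',
    TensorProduct.tmul_smul, key]
  rw [Finset.sum_comm]
end

section
/- Let H be a finite-dimensional complex inner product space with orthonormal basis b (indexed by a finite type), let κ : H → H be the conjugate-linear map fixing each b i (so κ(∑ i, c_i • b i) = ∑ i, conj(c_i) • b i), and let Φ := ∑ i, b i ⊗ₜ b i = Ψ_κ be the corresponding maximally entangled state. Let U be a unitary operator on H commuting with κ (equivalently, the matrix of U in the basis b has real entries), so that U ∘ κ is conjugate-linear with Ψ_{U∘κ} = (id_H ⊗ U) Φ. Then for every φ ∈ H: (id_{H ⊗ H} ⊗ U†)((P_{U∘κ} ⊗ id_H)(α(φ ⊗ₜ Φ))) = Ψ_{U∘κ} ⊗ₜ φ, where α : H ⊗ (H ⊗ H) ≃ (H ⊗ H) ⊗ H is the canonical associator. (This is the standard teleportation protocol: projecting the first two factors onto the Bell-type state Ψ_{U∘κ} and applying the unitary correction U† to the third factor transfers the unknown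 state φ to the third system; for H = ℂ² and U among the identity and the Pauli operators this gives the four branches of qubit teleportation.) -/
open scoped TensorProduct ComplexConjugate ComplexInnerProductSpace

noncomputable section

/-- the standard teleportation protocol. Projecting the first two factors of
`φ ⊗ Φ` onto the Bell-type state `Ψ_{U∘κ}` and applying the unitary correction `U†` to the
third factor transfers the unknown state `φ` to the third system. -/
theorem standard_teleportation
    {H : Type*} [NormedAddCommGroup H] [InnerProductSpace ℂ H] [FiniteDimensional ℂ H]
    {ι : Type*} [Fintype ι] (b : OrthonormalBasis ι ℂ H)
    (κ : H →ₗ⋆[ℂ] H) (hκ : ∀ i, κ (b i) = b i)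
    (U : H ≃ₗᵢ[ℂ] H)
    (hUκ : (U.toLinearEquiv.toLinearMap.comp κ : H →ₗ⋆[ℂ] H)
         = (κ.comp U.toLinearEquiv.toLinearMap : H →ₗ⋆[ℂ] H))
    (φ : H) :
    -- `Φ := ∑ i, b i ⊗ₜ b i`, the maximally entangled state
    letI Φ : H ⊗[ℂ] H := ∑ i, b i ⊗ₜ[ℂ] b i
    -- `U ∘ κ`, a conjugate-linear map
    letI Uκ : H →ₗ⋆[ℂ] H := U.toLinearEquiv.toLinearMap.comp κ
    -- `Ψ_{U∘κ} = (id ⊗ U) Φ`, and the teleportation identity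
    PsiState b Uκ
        = TensorProduct.map (LinearMap.id (R := ℂ) (M := H)) U.toLinearEquiv.toLinearMap Φ ∧
    TensorProduct.map (LinearMap.id (R := ℂ) (M := H ⊗[ℂ] H)) U.symm.toLinearEquiv.toLinearMap
        (TensorProduct.map (Pproj b Uκ) (LinearMap.id (R := ℂ) (M := H))
          ((TensorProduct.assoc ℂ H H H).symm (φ ⊗ₜ[ℂ] Φ)))
      = PsiState b Uκ ⊗ₜ[ℂ] φ := by

  -- κ expansion lemma
  have hκx : ∀ x : H, κ x = ∑ i, ⟪x, b i⟫ • b i := by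
    intro x
    conv_lhs => rw [← b.sum_repr x]
    rw [map_sum]
    refine Finset.sum_congr rfl fun i _ => ?_
    rw [map_smulₛₗ, hκ, b.repr_apply_apply]
    rw [inner_conj_symm]
  have hκκ : ∀ x : H, κ (κ x) = x := by
    intro x
    rw [hκx x, map_sum]
    conv_rhs => rw [← b.sum_repr x]
    refine Finset.sum_congr rfl fun i _ => ?_
    rw [map_smulₛₗ, hκ, b.repr_apply_apply]
    rw [inner_conj_symm]
  have hU : ∀ x : H, κ (U x) = U (κ x) := fun x => (LinearMap.ext_iff.mp hUκ x).symm
  have key : ∑ i, ⟪U (κ φ), b i⟫ • U.symm (b i) = φ := by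
    have : ∑ i, ⟪U (κ φ), b i⟫ • U.symm (b i)
        = U.symm (∑ i, ⟪U (κ φ), b i⟫ • b i) := by
      rw [map_sum]; simp
    rw [this, ← hκx (U (κ φ)), hU, hκκ]
    simp
  constructor
  · simp [PsiState, hκ, map_sum]
  · simp only [TensorProduct.tmul_sum, map_sum, TensorProduct.assoc_symm_tmul,
      TensorProduct.map_tmul, LinearMap.id_coe, id_eq, Pproj, LinearMap.smulRight_apply,
      epsFun, TensorProduct.lift.tmul, LinearMap.mk₂_apply, LinearMap.comp_apply,
      TensorProduct.smul_tmul]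
    rw [← TensorProduct.tmul_sum]
    congr 1
    simpa using key
end
end

section
/- Let H be a finite-dimensional complex inner product space with orthonormal basis b (indexed by a finite type), let κ : H → H be the conjugate-linear map fixing each b i, and let Φ := ∑ i, b i ⊗ₜ b i = Ψ_κ be the corresponding maximally entangled (EPR) state. Then (id_H ⊗ (P_κ ⊗ id_H))(σ(Φ ⊗ₜ Φ)) = ∑_{i,j} b i ⊗ₜ ((b j ⊗ₜ b j) ⊗ₜ b i), where σ : (H ⊗ H) ⊗ (H ⊗ H) ≃ H ⊗ ((H ⊗ H) ⊗ H) is the canonical reassociation sending (x₁ ⊗ x₂) ⊗ (x₃ ⊗ x₄) to x₁ ⊗ ((x₂ ⊗ x₃) ⊗ x₄). (Entanglement swapping: projecting the two middle factors of two EPR pairs onto the EPR state leaves the outer pair of factors in the EPR state.) -/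
open scoped TensorProduct ComplexConjugate ComplexInnerProductSpace

noncomputable section

/-- entanglement swapping. Projecting the two middle factors of two EPR pairs
onto the EPR state leaves the outer pair of factors in the EPR state. -/
theorem entanglement_swapping
    {H : Type*} [NormedAddCommGroup H] [InnerProductSpace ℂ H] [FiniteDimensional ℂ H]
    {ι : Type*} [Fintype ι] (b : OrthonormalBasis ι ℂ H)
    (κ : H →ₗ⋆[ℂ] H) (hκ : ∀ i, κ (b i) = b i) :
    -- `Φ := ∑ i, b i ⊗ₜ b i`, the maximally entangled (EPR) state; `Φ = Ψ_κ`
    letI Φ : H ⊗[ℂ] H := ∑ i, b i ⊗ₜ[ℂ] b i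
    -- `σ : (H ⊗ H) ⊗ (H ⊗ H) ≃ H ⊗ ((H ⊗ H) ⊗ H)`,
    -- `(x₁ ⊗ x₂) ⊗ (x₃ ⊗ x₄) ↦ x₁ ⊗ ((x₂ ⊗ x₃) ⊗ x₄)`
    letI σ : ((H ⊗[ℂ] H) ⊗[ℂ] (H ⊗[ℂ] H)) ≃ₗ[ℂ] H ⊗[ℂ] ((H ⊗[ℂ] H) ⊗[ℂ] H) :=
      (TensorProduct.assoc ℂ H H (H ⊗[ℂ] H)).trans
        (TensorProduct.congr (LinearEquiv.refl ℂ H) (TensorProduct.assoc ℂ H H H).symm)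
    TensorProduct.map (LinearMap.id (R := ℂ) (M := H))
        (TensorProduct.map (Pproj b κ) (LinearMap.id (R := ℂ) (M := H))) (σ (Φ ⊗ₜ[ℂ] Φ))
      = ∑ i, ∑ j, b i ⊗ₜ[ℂ] ((b j ⊗ₜ[ℂ] b j) ⊗ₜ[ℂ] b i) := by
  classical
  simp only [TensorProduct.sum_tmul, TensorProduct.tmul_sum, map_sum]
  have hP : ∀ i j : ι, Pproj b κ (b i ⊗ₜ[ℂ] b j)
      = (if i = j then (1:ℂ) else 0) • PsiState b κ := by
    intro i j
    simp [Pproj, epsFun, hκ, orthonormal_iff_ite.mp b.orthonormal]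
  have key : ∀ i j : ι,
      TensorProduct.map (LinearMap.id (R := ℂ) (M := H))
        (TensorProduct.map (Pproj b κ) (LinearMap.id (R := ℂ) (M := H)))
        ((TensorProduct.assoc ℂ H H (H ⊗[ℂ] H)).trans
          (TensorProduct.congr (LinearEquiv.refl ℂ H) (TensorProduct.assoc ℂ H H H).symm)
          ((b i ⊗ₜ[ℂ] b i) ⊗ₜ[ℂ] (b j ⊗ₜ[ℂ] b j)))
      = (if i = j then (1:ℂ) else 0) • (b i ⊗ₜ[ℂ] (PsiState b κ ⊗ₜ[ℂ] b j)) := by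
    intro i j
    simp only [LinearEquiv.trans_apply, TensorProduct.assoc_tmul, TensorProduct.congr_tmul,
      LinearEquiv.refl_apply, TensorProduct.assoc_symm_tmul, TensorProduct.map_tmul,
      LinearMap.id_apply, hP, ite_smul, one_smul, zero_smul]
    split_ifs <;> simp
  rw [Finset.sum_comm]
  rw [Finset.sum_congr rfl fun i _ => Finset.sum_congr rfl fun j _ => key i j]
  simp only [Finset.sum_ite_eq', Finset.mem_univ, if_true, ite_smul, one_smul, zero_smul]
  simp [PsiState, hκ, TensorProduct.sum_tmul, TensorProduct.tmul_sum]
end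
end

section
/- Let H₁, H₂, H₃ be finite-dimensional complex inner product spaces with orthonormal bases a, b, c (indexed by finite types), let M : ι₁ × ι₂ × ι₃ → ℂ, and let Ψ := ∑_{α,β,γ} M(α,β,γ) • ((a α ⊗ₜ b β) ⊗ₜ c γ) ∈ (H₁ ⊗ H₂) ⊗ H₃. Let g : H₁ → H₂ be a conjugate-linear map with matrix entries m_{αβ} := ⟪b β, g (a α)⟫. Then (P_g ⊗ id_{H₃}) Ψ = Ψ_g ⊗ₜ (∑_γ (∑_{α,β} conj(m_{αβ}) · M(α,β,γ)) • c γ). (Projecting the first two factors of a tripartite state onto the bipartite state Ψ_g leaves the third factor in the state obtained by applying the second-order functional interpretation of the tripartite state to the label g.) -/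
open scoped TensorProduct ComplexConjugate ComplexInnerProductSpace

noncomputable section

/-- projecting the first two factors of a tripartite state onto the bipartite
state `Ψ_g` leaves the third factor in the state obtained by applying the second-order
functional interpretation of the tripartite state to the label `g`. -/
theorem tripartite_second_order_application
    {H₁ H₂ H₃ : Type*}
    [NormedAddCommGroup H₁] [InnerProductSpace ℂ H₁] [FiniteDimensional ℂ H₁]
    [NormedAddCommGroup H₂] [InnerProductSpace ℂ H₂] [FiniteDimensional ℂ H₂]
    [NormedAddCommGroup H₃] [InnerProductSpace ℂ H₃] [FiniteDimensional ℂ H₃]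
    {ι₁ ι₂ ι₃ : Type*} [Fintype ι₁] [Fintype ι₂] [Fintype ι₃]
    (a : OrthonormalBasis ι₁ ℂ H₁) (b : OrthonormalBasis ι₂ ℂ H₂)
    (c : OrthonormalBasis ι₃ ℂ H₃)
    (M : ι₁ × ι₂ × ι₃ → ℂ) (g : H₁ →ₗ⋆[ℂ] H₂) :
    -- `Ψ := ∑ M(α,β,γ) • ((a α ⊗ₜ b β) ⊗ₜ c γ)`
    letI Ψ : (H₁ ⊗[ℂ] H₂) ⊗[ℂ] H₃ :=
      ∑ α, ∑ β, ∑ γ, M (α, β, γ) • ((a α ⊗ₜ[ℂ] b β) ⊗ₜ[ℂ] c γ)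
    -- `m α β := ⟪b β, g (a α)⟫`, the matrix of `g`
    letI m : ι₁ → ι₂ → ℂ := fun α β => ⟪b β, g (a α)⟫
    TensorProduct.map (Pproj a g) (LinearMap.id (R := ℂ) (M := H₃)) Ψ
      = PsiState a g ⊗ₜ[ℂ]
          (∑ γ, (∑ α, ∑ β, (starRingEnd ℂ) (m α β) * M (α, β, γ)) • c γ) := by
  classical
  simp only [map_sum, map_smul, TensorProduct.map_tmul, LinearMap.id_coe, id_eq,
    Pproj, LinearMap.smulRight_apply, epsFun, TensorProduct.lift.tmul,
    LinearMap.smul_apply, LinearMap.mk₂_apply, smul_eq_mul, inner_conj_symm,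
    TensorProduct.tmul_sum, TensorProduct.tmul_smul,
    Finset.sum_smul, TensorProduct.smul_tmul', smul_smul, mul_comm]
  conv_lhs => enter [2, α]; rw [Finset.sum_comm]
  exact Finset.sum_comm
end
end
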